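/- Let ω be a random vector with density p (the spectral density of a real-valued shift-invariant kernel k(x,y)=h(x−y)) and b ∼ Uniform(0, 2π) independent of ω. Define z(x) = √2 cos(ω·x + b). Then E[z(x) z(y)] = k(x,y) for all x, y ∈ ℝ^p. -/

import Mathlib

open MeasureTheory Real

/-! Writing `2 cos A cos C = cos (A - C) + cos (A + C)` with `A = ω·x + b`, `C = ω·y + b`,
the second term oscillates in `b` at frequency two and averages to zero over `[0, 2π]`. Hence the
average over the phase `b` of `z(x) z(y)` is `cos (ω·(x - y))`, and integrating this against the
spectral density gives `h (x - y) = k x y`. -/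

theorem integral_cos_add_two_mul_eq_zero (d : ℝ) :
    ∫ b in (0:ℝ)..(2 * π), cos (d + 2 * b) = 0 := by
  rw [intervalIntegral.integral_comp_add_mul cos two_ne_zero, integral_cos,
    show d + 2 * (2 * π) = d + 2 * π + 2 * π by ring, sin_add_two_pi, sin_add_two_pi]
  simp

theorem sqrt_two_mul_cos_mul_sqrt_two_mul_cos (a c b : ℝ) :
    (√2 * cos (a + b)) * (√2 * cos (c + b)) = cos (a - c) + cos (a + c + 2 * b) := by
  have hcos := two_mul_cos_mul_cos (a + b) (c + b)
  rw [show a + b - (c + b) = a - c by ring, show a + b + (c + b) = a + c + 2 * b by ring] at hcos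
  rw [← hcos, mul_mul_mul_comm, mul_self_sqrt zero_le_two, mul_assoc]

theorem phase_average_sqrt_two_mul_cos_mul (a c : ℝ) :
    (1 / (2 * π)) * ∫ b in (0:ℝ)..(2 * π), (√2 * cos (a + b)) * (√2 * cos (c + b))
      = cos (a - c) := by
  simp_rw [sqrt_two_mul_cos_mul_sqrt_two_mul_cos]
  rw [intervalIntegral.integral_add intervalIntegrable_const
      ((by fun_prop : Continuous fun b => cos (a + c + 2 * b)).intervalIntegrable _ _),
    integral_cos_add_two_mul_eq_zero, intervalIntegral.integral_const]
  field_simp [pi_ne_zero]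
  simp

theorem stmt2_general {p : ℕ} (k : (Fin p → ℝ) → (Fin p → ℝ) → ℝ) (h : (Fin p → ℝ) → ℝ)
    (ρ : (Fin p → ℝ) → ℝ)
    (hshift : ∀ x y, k x y = h (x - y))
    (hspec : ∀ u, h u = ∫ ω : Fin p → ℝ, Real.cos (∑ i, ω i * u i) * ρ ω) :
    ∀ x y, (∫ ω : Fin p → ℝ,
        ((1 / (2 * Real.pi)) * ∫ b in (0:ℝ)..(2 * Real.pi),
          (Real.sqrt 2 * Real.cos ((∑ i, ω i * x i) + b)) *
            (Real.sqrt 2 * Real.cos ((∑ i, ω i * y i) + b))) * ρ ω) = k x y := by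
  intro x y
  simp_rw [phase_average_sqrt_two_mul_cos_mul, ← Finset.sum_sub_distrib, ← mul_sub]
  rw [hshift, hspec]
  rfl

/-- For `z(x) = √2 cos(ω·x + b)` with `ω` drawn from the spectral density `ρ` and
`b ∼ Uniform(0, 2π)` independent of `ω`, one has `E[z(x) z(y)] = k(x,y)`. -/
theorem stmt2 {p : ℕ} (k : (Fin p → ℝ) → (Fin p → ℝ) → ℝ) (h : (Fin p → ℝ) → ℝ)
    (ρ : (Fin p → ℝ) → ℝ)
    (hshift : ∀ x y, k x y = h (x - y))
    (hcont : Continuous h) (hbdd : ∃ M, ∀ u, |h u| ≤ M)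
    (hρ_nonneg : ∀ ω, 0 ≤ ρ ω) (hρ_int : Integrable ρ)
    (hρ_prob : ∫ ω : Fin p → ℝ, ρ ω = 1)
    (hspec : ∀ u, h u = ∫ ω : Fin p → ℝ, Real.cos (∑ i, ω i * u i) * ρ ω) :
    ∀ x y, (∫ ω : Fin p → ℝ,
        ((1 / (2 * Real.pi)) * ∫ b in (0:ℝ)..(2 * Real.pi),
          (Real.sqrt 2 * Real.cos ((∑ i, ω i * x i) + b)) *
            (Real.sqrt 2 * Real.cos ((∑ i, ω i * y i) + b))) * ρ ω) = k x y :=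
  stmt2_general k h ρ hshift hspec
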